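/- arXiv:1811.07075 — 4 statements merged into one kernel-verified Lean document; each statement's English description precedes it below -/
import Mathlib

section
/- Let f : ℂ → ℂ be entire and non-constant, and let n > k ≥ 1 be integers. If (f^n)^{(k)} = f^n identically, then f has no zeros. -/
/-! At a zero of order `q ≥ 1` of `f`, the function `f ^ n` vanishes to order `n * q ≥ n > k`, so
its `k`-th derivative vanishes to order exactly `n * q - k < n * q`; thus `(f ^ n)^{(k)}` and
`f ^ n` cannot coincide. A non-constant entire function has only zeros of finite order. -/

lemma iteratedDeriv_ne_self_of_le_analyticOrderAt {𝕜 E : Type*} [NontriviallyNormedField 𝕜]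
    [CharZero 𝕜] [NormedAddCommGroup E] [NormedSpace 𝕜 E] [CompleteSpace E] {F : 𝕜 → E} {z₀ : 𝕜}
    (hF : AnalyticAt 𝕜 F z₀) {m k : ℕ} (hm : analyticOrderAt F z₀ = m) (hk : k ≠ 0)
    (hkm : k ≤ m) : iteratedDeriv k F ≠ F := by
  intro h
  have hord := analyticOrderAt_iterated_deriv hF hm.symm (by omega) hkm
  rw [← iteratedDeriv_eq_iterate, h, hm, Nat.cast_inj] at hord
  omega

lemma Differentiable.exists_analyticOrderAt_eq_of_ne_zero {f : ℂ → ℂ} (hf : Differentiable ℂ f)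
    (hf0 : f ≠ 0) {z : ℂ} (hz : f z = 0) : ∃ q : ℕ, q ≠ 0 ∧ analyticOrderAt f z = q := by
  have hfin : analyticOrderAt f z ≠ ⊤ := by
    rwa [Ne, AnalyticOnNhd.analyticOrderAt_eq_top_iff_eq_zero z hf.analyticAt]
  obtain ⟨q, hq⟩ := ENat.ne_top_iff_exists.mp hfin
  refine ⟨q, ?_, hq.symm⟩
  rintro rfl
  exact (hf.analyticAt z).analyticOrderAt_ne_zero.mpr hz (by simpa using hq.symm)

/-- If f is entire and non-constant, n > k ≥ 1 and (f^n)^(k) = f^n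
identically, then f has no zeros. -/
theorem stmt_1 (f : ℂ → ℂ) (hf : Differentiable ℂ f)
    (hnc : ¬∃ c : ℂ, f = fun _ => c) (n k : ℕ) (hk : 1 ≤ k) (hnk : k < n)
    (heq : iteratedDeriv k (f ^ n) = f ^ n) :
    ∀ z : ℂ, f z ≠ 0 := by
  intro z hz
  have hf0 : f ≠ 0 := fun h => hnc ⟨0, h⟩
  obtain ⟨q, hq0, hq⟩ := hf.exists_analyticOrderAt_eq_of_ne_zero hf0 hz
  have hfa : AnalyticAt ℂ f z := hf.analyticAt z
  have hpow : analyticOrderAt (f ^ n) z = (n * q : ℕ) := by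
    rw [analyticOrderAt_pow hfa, hq, nsmul_eq_mul, Nat.cast_mul]
  have hkq : k ≤ n * q := hnk.le.trans (Nat.le_mul_of_pos_right n (Nat.pos_of_ne_zero hq0))
  exact iteratedDeriv_ne_self_of_le_analyticOrderAt (hfa.pow n) hpow (by omega) hkq heq
end

section
/- Let n, k ≥ 1 with n = k ≥ 2, let f be entire and non-constant, and suppose (f^n)^{(k)} = f^n identically. Then f has no simple zeros. -/
private lemma aux_iteratedDeriv (z : ℂ) :
    ∀ (k : ℕ) (H : ℂ → ℂ), Differentiable ℂ H →
      iteratedDeriv k (fun w => (w - z) ^ k * H w) z = (k.factorial : ℂ) * H z := by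
  intro k
  induction k with
  | zero => intro H _; simp
  | succ k ih =>
    intro H hH
    have hH' : Differentiable ℂ (deriv H) :=
      ((contDiff_infty_iff_deriv.mp hH.contDiff).2).differentiable (by simp)
    have hd : deriv (fun w => (w - z) ^ (k + 1) * H w)
        = fun w => (w - z) ^ k * (((k : ℂ) + 1) * H w + (w - z) * deriv H w) := by
      funext w
      have h1 : HasDerivAt (fun w : ℂ => (w - z) ^ (k + 1)) (((k : ℂ) + 1) * (w - z) ^ k) w := by
        have h := ((hasDerivAt_id w).sub_const z).pow (k + 1)
        simp only [id_eq, Nat.add_sub_cancel, mul_one, Nat.cast_add, Nat.cast_one] at h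
        exact h
      have h2 : HasDerivAt H (deriv H w) w := (hH w).hasDerivAt
      have h3 : HasDerivAt (fun w => (w - z) ^ (k + 1) * H w) _ w := h1.mul h2
      rw [h3.deriv]
      ring
    rw [iteratedDeriv_succ', hd,
      ih _ (by
        apply Differentiable.add
        · exact (differentiable_const _).mul hH
        · exact ((differentiable_id.sub_const z)).mul hH')]
    rw [Nat.factorial_succ]
    push_cast
    ring

/-- If f is entire non-constant, n = k ≥ 2 and (f^k)^(k) = f^k identically,
then f has no simple zeros. -/
theorem stmt_7 (f : ℂ → ℂ) (hf : Differentiable ℂ f)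
    (hnc : ¬∃ c : ℂ, f = fun _ => c) (k : ℕ) (hk : 2 ≤ k)
    (heq : iteratedDeriv k (f ^ k) = f ^ k) :
    ∀ z : ℂ, f z = 0 → deriv f z = 0 := by
  intro z hz
  obtain ⟨p, hp⟩ := hf.analyticAt z
  have hda : AnalyticAt ℂ (dslope f z) z := ⟨p.fslope, hp.has_fpower_series_dslope_fslope⟩
  have hdiff : Differentiable ℂ (dslope f z) := by
    intro w
    rcases eq_or_ne w z with rfl | hw
    · exact hda.differentiableAt
    · exact (differentiableAt_dslope_of_ne hw).2 (hf w)
  have hfw : ∀ w, f w = (w - z) * dslope f z w := by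
    intro w
    have h1 := sub_smul_dslope f z w
    rw [hz, sub_zero, smul_eq_mul] at h1
    exact h1.symm
  have hgk : (f ^ k) = fun w => (w - z) ^ k * (dslope f z w) ^ k := by
    funext w
    simp only [Pi.pow_apply, hfw w, mul_pow]
  have key := aux_iteratedDeriv z k (fun w => (dslope f z w) ^ k) (hdiff.pow k)
  have e1 : iteratedDeriv k (f ^ k) z = (k.factorial : ℂ) * (dslope f z z) ^ k := by
    rw [hgk]; exact key
  rw [heq] at e1
  have e2 : (0 : ℂ) = (k.factorial : ℂ) * (deriv f z) ^ k := by
    rw [← dslope_same f z, ← e1, Pi.pow_apply, hz, zero_pow (by omega)]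
  have e3 : (deriv f z) ^ k = 0 := by
    have hfac : (k.factorial : ℂ) ≠ 0 := Nat.cast_ne_zero.mpr k.factorial_ne_zero
    rcases mul_eq_zero.mp e2.symm with h | h
    · exact absurd h hfac
    · exact h
  exact pow_eq_zero_iff (by omega : k ≠ 0) |>.mp e3
end

section
/- Define f(z) = (2e^z + z + 1)/(e^z + 1). Then f and f' share the value 1 CM in the sense that (f'(z) − 1)/(f(z) − 1) extends to a nonvanishing holomorphic function on the domain where e^z ≠ −1, but there is no nonzero constant c with f' − 1 = c·(f − 1). -/
open Complex

/-! The identity `f' - 1 = -eᶻ/(eᶻ + 1) · (f - 1)` holds wherever `eᶻ ≠ -1`, and the factor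
`-eᶻ/(eᶻ + 1)` is holomorphic and zero-free there. It is not constant: it equals `-1/2` at `0`
and `-2/3` at `log 2`, two points where `f - 1 = (eᶻ + z)/(eᶻ + 1)` does not vanish. -/

lemma exp_add_one_ne_zero {z : ℂ} (hz : exp z ≠ -1) : exp z + 1 ≠ 0 :=
  fun h => hz (eq_neg_of_add_eq_zero_left h)

lemma hasDerivAt_two_mul_exp_add_self_add_one_div (z : ℂ) (hz : exp z + 1 ≠ 0) :
    HasDerivAt (fun w => (2 * exp w + w + 1) / (exp w + 1))
      (((2 * exp z + 1) * (exp z + 1) - (2 * exp z + z + 1) * exp z) / (exp z + 1) ^ 2) z := by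
  have hnum : HasDerivAt (fun w => 2 * exp w + w + 1) (2 * exp z + 1) z :=
    (((hasDerivAt_exp z).const_mul 2).add (hasDerivAt_id z)).add_const 1
  exact hnum.div ((hasDerivAt_exp z).add_const 1) hz

lemma not_exists_eq_const_mul_of_ne {α M : Type*} [Mul M] [Zero M] [IsRightCancelMulZero M]
    {s : Set α} {u v g : α → M} (huv : ∀ z ∈ s, u z = g z * v z) {a b : α}
    (ha : a ∈ s) (hb : b ∈ s) (hva : v a ≠ 0) (hvb : v b ≠ 0) (hab : g a ≠ g b) :
    ¬∃ c : M, ∀ z ∈ s, u z = c * v z := by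
  rintro ⟨c, hc⟩
  have hca : g a = c := mul_right_cancel₀ hva ((huv a ha).symm.trans (hc a ha))
  have hcb : g b = c := mul_right_cancel₀ hvb ((huv b hb).symm.trans (hc b hb))
  exact hab (hca.trans hcb.symm)

variable {f : ℂ → ℂ}

lemma sub_one_eq_exp_add_self_div (hf : ∀ z : ℂ, f z = (2 * exp z + z + 1) / (exp z + 1))
    {z : ℂ} (hz : exp z + 1 ≠ 0) : f z - 1 = (exp z + z) / (exp z + 1) := by
  rw [hf z]
  field_simp
  ring

lemma deriv_sub_one_eq_mul_sub_one (hf : ∀ z : ℂ, f z = (2 * exp z + z + 1) / (exp z + 1))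
    {z : ℂ} (hz : exp z + 1 ≠ 0) : deriv f z - 1 = -exp z / (exp z + 1) * (f z - 1) := by
  rw [show f = _ from funext hf, (hasDerivAt_two_mul_exp_add_self_add_one_div z hz).deriv,
    ← show f = _ from funext hf, sub_one_eq_exp_add_self_div hf hz]
  field_simp
  ring

/-- For f(z) = (2e^z+z+1)/(e^z+1): the quotient (f'−1)/(f−1) extends to a
nonvanishing holomorphic function on {z | e^z ≠ −1}, but f'−1 is not a
nonzero constant multiple of f−1 there. -/
theorem stmt_8 (f : ℂ → ℂ)
    (hf : ∀ z : ℂ, f z = (2 * exp z + z + 1) / (exp z + 1)) :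
    (∃ g : ℂ → ℂ, DifferentiableOn ℂ g {z : ℂ | exp z ≠ -1} ∧
      (∀ z ∈ {z : ℂ | exp z ≠ -1}, g z ≠ 0) ∧
      (∀ z ∈ {z : ℂ | exp z ≠ -1}, deriv f z - 1 = g z * (f z - 1))) ∧
    ¬∃ c : ℂ, c ≠ 0 ∧ ∀ z ∈ {z : ℂ | exp z ≠ -1}, deriv f z - 1 = c * (f z - 1) := by
  have hrel (z : ℂ) (hz : z ∈ {z : ℂ | exp z ≠ -1}) :=
    deriv_sub_one_eq_mul_sub_one hf (exp_add_one_ne_zero hz)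
  refine ⟨⟨fun z => -exp z / (exp z + 1), ?_, fun z hz => ?_, hrel⟩, ?_⟩
  · exact differentiable_exp.neg.differentiableOn.div
      (differentiable_exp.add_const 1).differentiableOn fun z hz => exp_add_one_ne_zero hz
  · exact div_ne_zero (neg_ne_zero.mpr (exp_ne_zero z)) (exp_add_one_ne_zero hz)
  · have hexp_log_two : exp (Real.log 2 : ℂ) = 2 := by
      rw [← ofReal_exp, Real.exp_log two_pos, ofReal_ofNat]
    have hlog_two : (2 + Real.log 2 : ℂ) ≠ 0 := by
      exact_mod_cast (by positivity : (2 + Real.log 2 : ℝ) ≠ 0)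
    have hnot := not_exists_eq_const_mul_of_ne hrel (a := 0) (b := Real.log 2)
      (by norm_num) (show exp _ ≠ -1 by rw [hexp_log_two]; norm_num)
      (by norm_num [sub_one_eq_exp_add_self_div hf])
      (by rw [sub_one_eq_exp_add_self_div hf (by rw [hexp_log_two]; norm_num), hexp_log_two]
          exact div_ne_zero hlog_two (by norm_num))
      (by rw [hexp_log_two]; norm_num)
    exact fun ⟨c, _, hc⟩ => hnot ⟨c, hc⟩
end

section
/- Let f(z) = 2/(1 − e^{−2z}) on the domain where e^{−2z} ≠ 1. Then f(z) − 1 = (1 + e^{−2z})/(1 − e^{−2z}) and f'(z) − 1 = −(1 + e^{−2z})²/(1 − e^{−2z})² identically, so f and f' share the value 1 IM (same zero set: e^{−2z} = −1), but f' ≢ f. -/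
open Complex

theorem hasDerivAt_two_div_one_sub_exp_neg_two_mul {z : ℂ} (hz : exp (-(2 * z)) ≠ 1) :
    HasDerivAt (fun z : ℂ => 2 / (1 - exp (-(2 * z))))
      (-4 * exp (-(2 * z)) / (1 - exp (-(2 * z))) ^ 2) z := by
  have hlin : HasDerivAt (fun z : ℂ => -(2 * z)) (-2) z := by
    simpa using ((hasDerivAt_id z).const_mul (2 : ℂ)).fun_neg
  have hden : HasDerivAt (fun z : ℂ => 1 - exp (-(2 * z))) (2 * exp (-(2 * z))) z :=
    (hlin.cexp.const_sub 1).congr_deriv (by ring)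
  exact ((hasDerivAt_const z (2 : ℂ)).div hden (sub_ne_zero.mpr hz.symm)).congr_deriv (by ring)

/-- For f(z) = 2/(1 − e^{−2z}) on {z | e^{−2z} ≠ 1}:
f − 1 = (1+e^{−2z})/(1−e^{−2z}), f' − 1 = −(1+e^{−2z})²/(1−e^{−2z})², and
f' ≢ f on this domain. -/
theorem stmt_14 (f : ℂ → ℂ)
    (hf : ∀ z : ℂ, f z = 2 / (1 - exp (-(2 * z)))) :
    (∀ z : ℂ, exp (-(2 * z)) ≠ 1 →
      f z - 1 = (1 + exp (-(2 * z))) / (1 - exp (-(2 * z))) ∧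
      deriv f z - 1 = -((1 + exp (-(2 * z))) ^ 2 / (1 - exp (-(2 * z))) ^ 2)) ∧
    ¬∀ z : ℂ, exp (-(2 * z)) ≠ 1 → deriv f z = f z := by
  have deriv_eq {z : ℂ} (hz : exp (-(2 * z)) ≠ 1) :
      deriv f z = -4 * exp (-(2 * z)) / (1 - exp (-(2 * z))) ^ 2 := by
    rw [funext hf]
    exact (hasDerivAt_two_div_one_sub_exp_neg_two_mul hz).deriv
  refine ⟨fun z hz => ?_, fun h => ?_⟩
  · have hden : 1 - exp (-(2 * z)) ≠ 0 := sub_ne_zero.mpr hz.symm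
    rw [hf, deriv_eq hz]
    constructor <;> field_simp <;> ring
  · -- at a point where e^{−2z} = 2 we have f' = −8 but f = −2
    set z₀ : ℂ := -(log 2) / 2
    have hexp : exp (-(2 * z₀)) = 2 := by
      rw [show -(2 * z₀) = log 2 by ring, exp_log two_ne_zero]
    have hz₀ : exp (-(2 * z₀)) ≠ 1 := by rw [hexp]; norm_num
    have := h z₀ hz₀
    rw [deriv_eq hz₀, hf, hexp] at this
    norm_num at this
end
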